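/- Let q > 1 be a real number, r ≥ 1, c_1,…,c_r nonzero real numbers, a_1,…,a_r nonnegative integers, b_1,…,b_r integers, with the pairs (a_i,b_i) pairwise distinct. Then the function h(x) = Σ_{i=1}^r c_i x^{a_i} q^{b_i x} is bounded on ℕ if and only if for every i one has b_i ≤ 0, and moreover a_i = 0 whenever b_i = 0. -/

import Mathlib

/-!
Order the terms `x ^ a * q ^ (b * x)` lexicographically by `(b, a)`. A strictly smaller term is
little-o of a larger one, so a sum with nonzero coefficients and distinct exponent pairs is
asymptotic to a nonzero multiple of its lex-largest term. Being bounded on `ℕ` means being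
`O(1) = O(x ^ 0 * q ^ (0 * x))`, which for a single term happens exactly when `(b, a) ≤ (0, 0)`.
-/

open Filter Finset Asymptotics

section PowExp

variable {q : ℝ} {a A : ℕ} {b B : ℤ}

noncomputable def powExp (q : ℝ) (a : ℕ) (b : ℤ) (x : ℕ) : ℝ := (x : ℝ) ^ a * q ^ (b * (x : ℤ))

lemma powExp_zero_zero (q : ℝ) : powExp q 0 0 = fun _ => 1 := by
  ext x; simp [powExp]

lemma powExp_zero_right (q : ℝ) (a : ℕ) : powExp q a 0 = fun x : ℕ => (x : ℝ) ^ a := by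
  ext x; simp [powExp]

lemma powExp_mul_zpow (hq : q ≠ 0) (x : ℕ) :
    powExp q a b x * q ^ (B * (x : ℤ)) = powExp q a (b + B) x := by
  rw [powExp, powExp, add_mul, zpow_add₀ hq, mul_assoc]

lemma powExp_ne_zero (hq : 0 < q) {x : ℕ} (hx : x ≠ 0) : powExp q a b x ≠ 0 := by
  unfold powExp; positivity

lemma tendsto_powExp_of_neg (hq : 1 < q) (hb : b < 0) :
    Tendsto (powExp q a b) atTop (nhds 0) := by
  have hqb : |q ^ b| < 1 := by
    rw [abs_of_pos (zpow_pos (by positivity) b)]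
    exact zpow_lt_one_of_neg₀ hq hb
  convert tendsto_pow_const_mul_const_pow_of_abs_lt_one a hqb using 2 with x
  rw [powExp, zpow_mul, zpow_natCast]

lemma isLittleO_powExp_zero_right (hq : 1 < q) (h : toLex (b, a) < toLex ((0 : ℤ), A)) :
    powExp q a b =o[atTop] powExp q A 0 := by
  rw [powExp_zero_right]
  rcases Prod.Lex.toLex_lt_toLex.1 h with hb | ⟨hb, ha⟩
  · have hone : (fun _ => (1 : ℝ)) =O[atTop] fun x : ℕ => (x : ℝ) ^ A :=
      IsBigO.of_bound' <| (eventually_ge_atTop 1).mono fun x hx => by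
        simpa using one_le_pow₀ (M₀ := ℝ) (by exact_mod_cast hx)
    exact (isLittleO_one_iff ℝ |>.2 (tendsto_powExp_of_neg hq hb)).trans_isBigO hone
  · rw [show b = 0 from hb, powExp_zero_right]
    exact (isLittleO_pow_pow_atTop_of_lt ha).comp_tendsto tendsto_natCast_atTop_atTop

lemma isLittleO_powExp (hq : 1 < q) (h : toLex (b, a) < toLex (B, A)) :
    powExp q a b =o[atTop] powExp q A B := by
  have hshift : toLex (b - B, a) < toLex ((0 : ℤ), A) := by
    simpa [Prod.Lex.toLex_lt_toLex, sub_eq_zero] using h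
  have := (isLittleO_powExp_zero_right hq hshift).mul_isBigO
    (isBigO_refl (fun x : ℕ => q ^ (B * (x : ℤ))) atTop)
  have hq0 : q ≠ 0 := by positivity
  simpa only [powExp_mul_zpow hq0, sub_add_cancel, zero_add] using this

lemma isBigO_powExp_iff (hq : 1 < q) :
    powExp q a b =O[atTop] powExp q A B ↔ toLex (b, a) ≤ toLex (B, A) := by
  refine ⟨fun hO => ?_, fun h => ?_⟩
  · by_contra! hlt
    refine isLittleO_irrefl ?_ (hO.trans_isLittleO (isLittleO_powExp hq hlt))
    exact ((eventually_ne_atTop 0).mono fun x hx => powExp_ne_zero (by positivity) hx).frequently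
  · rcases h.lt_or_eq with hlt | heq
    · exact (isLittleO_powExp hq hlt).isBigO
    · cases heq
      exact isBigO_refl _ _

end PowExp

lemma isBigO_sum_const_mul_of_isLittleO {ι α : Type*} [Fintype ι] {l : Filter α}
    {f : ι → α → ℝ} {c : ι → ℝ} {j : ι} (hcj : c j ≠ 0) (hf : ∀ i ≠ j, f i =o[l] f j) :
    f j =O[l] fun x => ∑ i, c i * f i x := by
  classical
  have hrest : (fun x => ∑ i ∈ univ.erase j, c i * f i x) =o[l] fun x => c j * f j x :=
    IsLittleO.fun_sum fun i hi =>
      ((hf i (ne_of_mem_erase hi)).const_mul_left (c i)).trans_isBigO (isBigO_self_const_mul hcj _ _)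
  have hequiv : (fun x => ∑ i, c i * f i x) ~[l] fun x => c j * f j x := by
    refine hrest.congr_left fun x => ?_
    rw [Pi.sub_apply, ← add_sum_erase univ _ (mem_univ j)]
    ring
  exact (isBigO_self_const_mul hcj _ _).trans hequiv.isBigO_symm

lemma isBigO_sum_powExp_iff {ι : Type*} [Fintype ι] {q : ℝ} (hq : 1 < q) {c : ι → ℝ}
    (hc : ∀ i, c i ≠ 0) {a : ι → ℕ} {b : ι → ℤ} (hab : Function.Injective fun i => (a i, b i))
    (A : ℕ) (B : ℤ) :
    (fun x => ∑ i, c i * powExp q (a i) (b i) x) =O[atTop] powExp q A B ↔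
      ∀ i, toLex (b i, a i) ≤ toLex (B, A) := by
  refine ⟨fun hO i => ?_, fun h => ?_⟩
  · obtain ⟨j, -, hj⟩ := exists_max_image univ (fun i => toLex (b i, a i)) ⟨i, mem_univ i⟩
    have hlt : ∀ k ≠ j, toLex (b k, a k) < toLex (b j, a j) := fun k hk =>
      (hj k (mem_univ k)).lt_of_ne fun he => hk (hab (by simpa [and_comm] using he))
    have hdom := isBigO_sum_const_mul_of_isLittleO (hc j) fun k hk => isLittleO_powExp hq (hlt k hk)
    exact (hj i (mem_univ i)).trans ((isBigO_powExp_iff hq).1 (hdom.trans hO))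
  · exact IsBigO.fun_sum fun i _ =>
      (isBigO_const_mul_self _ _ _).trans ((isBigO_powExp_iff hq).2 (h i))

theorem sum_powexp_bounded_iff_general (q : ℝ) (hq : 1 < q) (r : ℕ)
    (c : Fin r → ℝ) (hc : ∀ i, c i ≠ 0) (a : Fin r → ℕ) (b : Fin r → ℤ)
    (hab : Function.Injective fun i => (a i, b i)) :
    (∃ M : ℝ, ∀ x : ℕ, |∑ i, c i * (x : ℝ) ^ (a i) * q ^ (b i * (x : ℤ))| ≤ M) ↔
      ∀ i, b i ≤ 0 ∧ (b i = 0 → a i = 0) := by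
  have hbounded := isBigO_sum_powExp_iff hq hc hab 0 0
  rw [powExp_zero_zero, isBigO_one_nat_atTop_iff] at hbounded
  simpa only [powExp, mul_assoc, Real.norm_eq_abs, Prod.Lex.toLex_le_toLex', nonpos_iff_eq_zero]
    using hbounded

/-- `h(x) = ∑_i c_i x^{a_i} q^{b_i x}` is bounded on `ℕ` iff all `b_i ≤ 0` and
`a_i = 0` whenever `b_i = 0`. -/
theorem sum_powexp_bounded_iff (q : ℝ) (hq : 1 < q) (r : ℕ) (hr : 1 ≤ r)
    (c : Fin r → ℝ) (hc : ∀ i, c i ≠ 0) (a : Fin r → ℕ) (b : Fin r → ℤ)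
    (hab : Function.Injective fun i => (a i, b i)) :
    (∃ M : ℝ, ∀ x : ℕ, |∑ i, c i * (x : ℝ) ^ (a i) * q ^ (b i * (x : ℤ))| ≤ M) ↔
      ∀ i, b i ≤ 0 ∧ (b i = 0 → a i = 0) :=
  sum_powexp_bounded_iff_general q hq r c hc a b hab
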